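/- Let K be a number field, let f = (X − a)² − b ∈ K[X] be a monic quadratic polynomial, and let α be an element of a fixed algebraic closure K̄ of K. Then the compositum K_∞(f,α) of the splitting fields over K(α) of all the polynomials f^n(X) − α, n ≥ 1, is a finite extension of K(α) if and only if α is exceptional for f. -/

import Mathlib

/-!
If `K_∞(f, α)/K(α)` is finite, all preimages of `α` lie in one number field. There the backward
orbit of `γ` under `t ↦ (t - A)² - B` is finite: for a common denominator `d` of `A, B, γ`,
each `d x` is an algebraic integer (every backward step solves a monic quadratic), and every
conjugate of `x` has absolute value at most `s²`, `s = |A| + |B| + |γ| + 2`, since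
`|x - A|² ≤ s² + s` forces `|x| ≤ 2s - 1 ≤ s²`. Algebraic integers of bounded house are finite
in number. Conversely, finitely many algebraic elements generate a finite extension.
-/

open Polynomial

namespace Function

variable {α β : Type*}

def backwardOrbit (F : α → α) (γ : α) : Set α := {x | ∃ n, F^[n] x = γ}

theorem forall_mem_backwardOrbit {F : α → α} {γ : α} {P : α → Prop} (hγ : P γ)
    (hF : ∀ x, P (F x) → P x) : ∀ x ∈ backwardOrbit F γ, P x := by
  rintro x ⟨n, hn⟩
  induction n generalizing x with
  | zero => exact (show x = γ from hn) ▸ hγ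
  | succ n ih => exact hF x (ih (F x) hn)

variable {ι : α → β} {F : α → α} {G : β → β}

theorem Semiconj.mapsTo_backwardOrbit (h : Semiconj ι F G) (γ : α) :
    Set.MapsTo ι (backwardOrbit F γ) (backwardOrbit G (ι γ)) := by
  rintro x ⟨n, rfl⟩
  exact ⟨n, ((h.iterate_right n).eq x).symm⟩

theorem Semiconj.preimage_backwardOrbit (h : Semiconj ι F G) (hι : Injective ι) (γ : α) :
    ι ⁻¹' backwardOrbit G (ι γ) = backwardOrbit F γ := by
  refine Set.Subset.antisymm ?_ (h.mapsTo_backwardOrbit γ)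
  rintro x ⟨n, hn⟩
  exact ⟨n, hι (((h.iterate_right n).eq x).trans hn)⟩

end Function

open Function

theorem Polynomial.aeval_iterate_comp_X {R A : Type*} [CommSemiring R] [CommSemiring A]
    [Algebra R A] (f : R[X]) (n : ℕ) (x : A) :
    aeval x ((fun p => p.comp f)^[n] X) = (fun t => aeval t f)^[n] x := by
  induction n generalizing x with
  | zero => simp
  | succ n ih => rw [iterate_succ_apply', aeval_comp, ih, iterate_succ_apply]

theorem isIntegral_mul_of_mem_backwardOrbit {R L : Type*} [CommRing R] [CommRing L]
    [Algebra R L] {c A B γ x : L} (hc : IsIntegral R c) (hA : IsIntegral R (c * A))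
    (hB : IsIntegral R (c * B)) (hγ : IsIntegral R (c * γ))
    (hx : x ∈ backwardOrbit (fun t => (t - A) ^ 2 - B) γ) : IsIntegral R (c * x) := by
  refine forall_mem_backwardOrbit (P := fun y => IsIntegral R (c * y)) hγ (fun y hy => ?_) x hx
  have hsq : (c * y - c * A) ^ 2 = c * (c * ((y - A) ^ 2 - B)) + c * (c * B) := by
    ring
  have hyA : IsIntegral R (c * y - c * A) :=
    .of_pow two_pos (hsq ▸ (hc.mul hy).add (hc.mul hB))
  simpa using hyA.add hA

theorem norm_le_of_norm_sq_sub_sub_le {𝕜 : Type*} [NormedDivisionRing 𝕜] {A B x : 𝕜} {s : ℝ}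
    (hs : ‖A‖ + ‖B‖ + 2 ≤ s) (h : ‖(x - A) ^ 2 - B‖ ≤ s ^ 2) : ‖x‖ ≤ s ^ 2 := by
  have hxA : ‖x - A‖ ^ 2 ≤ s ^ 2 + ‖B‖ := by
    calc ‖x - A‖ ^ 2 = ‖(x - A) ^ 2 - B + B‖ := by rw [sub_add_cancel, norm_pow]
      _ ≤ s ^ 2 + ‖B‖ := (norm_add_le _ _).trans (by gcongr)
  have hx : ‖x‖ ≤ ‖A‖ + ‖x - A‖ := by
    simpa using norm_add_le A (x - A)
  nlinarith [norm_nonneg A, norm_nonneg B, norm_nonneg (x - A), sq_nonneg (s - 1)]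

theorem norm_le_of_mem_backwardOrbit {𝕜 : Type*} [NormedDivisionRing 𝕜] {A B γ x : 𝕜}
    {s : ℝ} (hs : ‖A‖ + ‖B‖ + 2 ≤ s) (hγ : ‖γ‖ ≤ s ^ 2)
    (hx : x ∈ backwardOrbit (fun t => (t - A) ^ 2 - B) γ) : ‖x‖ ≤ s ^ 2 :=
  forall_mem_backwardOrbit (P := fun y => ‖y‖ ≤ s ^ 2) hγ
    (fun _ => norm_le_of_norm_sq_sub_sub_le hs) x hx

namespace NumberField

variable {L : Type*} [Field L] [NumberField L]

theorem finite_backwardOrbit_sq_sub (A B γ : L) :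
    (backwardOrbit (fun t => (t - A) ^ 2 - B) γ).Finite := by
  classical
  obtain ⟨d, hd, hdint⟩ := exists_integral_multiples ℤ ℚ ({A, B, γ} : Finset L)
  simp only [Finset.mem_insert, Finset.mem_singleton, forall_eq_or_imp, forall_eq,
    zsmul_eq_mul] at hdint
  obtain ⟨hA, hB, hγ⟩ := hdint
  let s : (L →+* ℂ) → ℝ := fun φ => ‖φ A‖ + ‖φ B‖ + ‖φ γ‖ + 2
  obtain ⟨r, hr⟩ := (Set.finite_range fun φ : L →+* ℂ => ‖φ d‖ * s φ ^ 2).bddAbove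
  refine .of_finite_image ((Embeddings.finite_of_norm_le L ℂ r).subset ?_)
    (mul_right_injective₀ (Int.cast_ne_zero.mpr hd)).injOn
  rintro _ ⟨x, hx, rfl⟩
  refine ⟨isIntegral_mul_of_mem_backwardOrbit (isIntegral_intCast d) hA hB hγ hx, fun φ => ?_⟩
  have hφ : Semiconj φ (fun t => (t - A) ^ 2 - B) (fun t => (t - φ A) ^ 2 - φ B) :=
    fun t => by simp only [map_sub, map_pow]
  have hφx : ‖φ x‖ ≤ s φ ^ 2 :=
    norm_le_of_mem_backwardOrbit (by linarith [norm_nonneg (φ γ)])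
      (by nlinarith [norm_nonneg (φ A), norm_nonneg (φ B), norm_nonneg (φ γ)])
      (hφ.mapsTo_backwardOrbit γ hx)
  calc ‖φ (d * x)‖ = ‖φ d‖ * ‖φ x‖ := by rw [map_mul, norm_mul]
    _ ≤ ‖φ d‖ * s φ ^ 2 := by gcongr
    _ ≤ r := hr ⟨φ, rfl⟩

theorem finite_backwardOrbit_sq_sub_inter_range {Ω : Type*} [Field Ω] (ι : L →+* Ω)
    (A B γ : L) :
    (backwardOrbit (fun t => (t - ι A) ^ 2 - ι B) (ι γ) ∩ Set.range ι).Finite := by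
  have hι : Semiconj ι (fun t => (t - A) ^ 2 - B) (fun t => (t - ι A) ^ 2 - ι B) :=
    fun t => by simp only [map_sub, map_pow]
  rw [← Set.image_preimage_eq_inter_range, hι.preimage_backwardOrbit ι.injective]
  exact (finite_backwardOrbit_sq_sub A B γ).image ι

end NumberField

/-- Over a number field `K`, for `f = (X-a)^2 - b` and `α` in a fixed algebraic
closure, the compositum over `K(α)` of the splitting fields of the `f^n(X) - α` is a finite
extension of `K(α)` iff `α` is exceptional for `f` (finite backward orbit). -/
theorem stmt_8 (K : Type*) [Field K] [NumberField K] (a b : K)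
    (f : K[X]) (hf : f = (X - C a) ^ 2 - C b) (α : AlgebraicClosure K) :
    FiniteDimensional
      (IntermediateField.adjoin K ({α} : Set (AlgebraicClosure K)))
      (IntermediateField.adjoin
        (↥(IntermediateField.adjoin K ({α} : Set (AlgebraicClosure K))))
        {x : AlgebraicClosure K | ∃ n : ℕ, 1 ≤ n ∧
          Polynomial.aeval x ((fun p => p.comp f)^[n] X) = α}) ↔
      Set.Finite {x : AlgebraicClosure K | ∃ n : ℕ, 1 ≤ n ∧
        Polynomial.aeval x ((fun p => p.comp f)^[n] X) = α} := by
  set Kα := IntermediateField.adjoin K ({α} : Set (AlgebraicClosure K))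
  set S := {x : AlgebraicClosure K | ∃ n : ℕ, 1 ≤ n ∧ aeval x ((fun p => p.comp f)^[n] X) = α}
  have hint (x : AlgebraicClosure K) : IsIntegral K x := Algebra.IsIntegral.isIntegral x
  constructor
  · intro hfin
    let E' := IntermediateField.adjoin Kα S
    have : FiniteDimensional K Kα := IntermediateField.adjoin.finiteDimensional (hint α)
    have : FiniteDimensional K E' := Module.Finite.trans Kα E'
    let E := E'.restrictScalars K
    have : FiniteDimensional K E := this
    have : NumberField E := NumberField.of_module_finite K E
    have hαE : α ∈ E := E'.algebraMap_mem ⟨α, IntermediateField.mem_adjoin_simple_self K α⟩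
    have hf_eval (t : AlgebraicClosure K) :
        aeval t f = (t - algebraMap K _ a) ^ 2 - algebraMap K _ b := by
      simp [hf]
    refine (NumberField.finite_backwardOrbit_sq_sub_inter_range (algebraMap E _)
      (algebraMap K E a) (algebraMap K E b) ⟨α, hαE⟩).subset fun x hx => ⟨?_, ?_⟩
    · obtain ⟨n, -, hn⟩ := hx
      rw [aeval_iterate_comp_X, funext hf_eval] at hn
      exact ⟨n, hn⟩
    · exact ⟨⟨x, IntermediateField.subset_adjoin Kα S hx⟩, rfl⟩
  · intro hfin
    have : Finite S := hfin.to_subtype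
    exact IntermediateField.finiteDimensional_adjoin fun x _ => (hint x).tower_top
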